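/- arXiv:2411.19373 — 3 statements merged into one kernel-verified Lean document; each statement's English description precedes it below -/
import Mathlib

section
/- (Black shenanigans) Let (C, A) be an avoider-enforcer position with A nonempty, K ≥ |C| + 2, and consider the Paintbucket position G_K(C, A) with Black to move. If Black moves at any vertex other than a vertex of type u (i.e., at the universal white vertex s or at a vertex t_{j,k}), then White has a winning strategy in the resulting position. -/
/-- A Paintbucket position: a colored graph on vertex type `V`, with a finite
set of live vertices, a coloring (`true` = black), and a boolean adjacency. -/
structure PB (V : Type) where
  verts : Finset V
  black : V → Bool
  adj : V → V → Bool

namespace PB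

variable {V : Type} [DecidableEq V]

/-- The neighbors of `v` among the live vertices. -/
def nbrs (P : PB V) (v : V) : Finset V :=
  P.verts.filter fun w => P.adj v w = true

/-- The move of player `p` (`true` = Black) at vertex `v`: delete the
neighbors of `v`, recolor `v` with the mover's color, and connect `v` to all
former neighbors of the deleted vertices. -/
def move (p : Bool) (P : PB V) (v : V) : PB V :=
  let del := P.nbrs v
  let vs := insert v (P.verts \ del)
  { verts := vs
    black := fun x => if x = v then p else P.black x
    adj := fun x y =>
      decide (x ∈ vs) && decide (y ∈ vs) && decide (x ≠ y) &&
        (if x = v then P.adj v y || decide (∃ w ∈ del, P.adj w y = true)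
         else if y = v then P.adj v x || decide (∃ w ∈ del, P.adj w x = true)
         else P.adj x y) }

/-- Player `p` may move at `v` iff the game is not over (at least two vertices
remain), `v` is live, and `v` has the opponent's color. -/
def legal (p : Bool) (P : PB V) (v : V) : Prop :=
  1 < P.verts.card ∧ v ∈ P.verts ∧ P.black v = !p

instance (p : Bool) (P : PB V) (v : V) : Decidable (legal p P v) := by
  unfold legal; infer_instance

/-- `blackWinsAux n p P`: with fuel `n` and player `p` to move, Black wins
with optimal play. When the game is over, Black wins iff the remaining vertex
is black. -/
def blackWinsAux : ℕ → Bool → PB V → Prop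
  | 0, _, P => ∃ v ∈ P.verts, P.black v = true
  | n + 1, p, P =>
    if P.verts.card ≤ 1 then ∃ v ∈ P.verts, P.black v = true
    else if p then ∃ v, legal true P v ∧ blackWinsAux n false (move true P v)
    else ∀ v, legal false P v → blackWinsAux n true (move false P v)

/-- Black wins with `p` to move (fuel `P.verts.card` suffices since every move
in a connected position removes at least one vertex). -/
def blackWins (p : Bool) (P : PB V) : Prop :=
  blackWinsAux P.verts.card p P

/-- The coloring is proper: edges join vertices of different colors. -/
def Bipartite (P : PB V) : Prop :=
  ∀ x y, P.adj x y = true → P.black x ≠ P.black y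

/-- Any two live vertices are joined by a path. -/
def Connected (P : PB V) : Prop :=
  ∀ x ∈ P.verts, ∀ y ∈ P.verts,
    Relation.ReflTransGen (fun a b => P.adj a b = true) x y

/-- A valid Paintbucket position: symmetric irreflexive adjacency supported on
the live vertices, properly two-colored, and connected. -/
def Valid (P : PB V) : Prop :=
  (∀ x y, P.adj x y = P.adj y x) ∧
  (∀ x, P.adj x x = false) ∧
  (∀ x y, P.adj x y = true → x ∈ P.verts ∧ y ∈ P.verts) ∧
  P.Bipartite ∧ P.Connected

/-- Isomorphism of colored positions. -/
def Isom {W : Type} (P : PB V) (Q : PB W) : Prop :=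
  ∃ f : V → W, Set.BijOn f ↑P.verts ↑Q.verts ∧
    (∀ x ∈ P.verts, Q.black (f x) = P.black x) ∧
    ∀ x ∈ P.verts, ∀ y ∈ P.verts, Q.adj (f x) (f y) = P.adj x y

/-- Play out a list of (player, vertex) moves. -/
def run (P : PB V) : List (Bool × V) → PB V
  | [] => P
  | m :: ms => run (move m.1 P m.2) ms

/-- All moves in the list are legal when played in order. -/
def legalRun (P : PB V) : List (Bool × V) → Prop
  | [] => True
  | m :: ms => legal m.1 P m.2 ∧ legalRun (move m.1 P m.2) ms

end PB

/-- Vertices of the gadget graph `G_K(C, A)`: `v i`, `u i` for cells `i`,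
`w k` for `k < K`, `t j k` for avoider-set indices `j`, and `r`, `s`. -/
inductive GV (ι κ : Type) (K : ℕ) where
  | v : ι → GV ι κ K
  | u : ι → GV ι κ K
  | w : Fin K → GV ι κ K
  | t : κ → Fin K → GV ι κ K
  | r : GV ι κ K
  | s : GV ι κ K
  deriving DecidableEq, Fintype

/-- Colors in the gadget graph: `v i`, `w k`, `r` are black; `u i`, `t j k`, `s` are white. -/
def Gblack {ι κ : Type} {K : ℕ} : GV ι κ K → Bool
  | .v _ => true
  | .w _ => true
  | .r => true
  | _ => false

/-- Orientation of the edges of the gadget graph. -/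
def Gedge {ι κ : Type} [DecidableEq ι] {K : ℕ} (A : κ → Finset ι) :
    GV ι κ K → GV ι κ K → Bool
  | .r, .u _ => true
  | .v i, .u i' => decide (i = i')
  | .v _, .s => true
  | .t _ _, .r => true
  | .s, .r => true
  | .t _ _, .w _ => true
  | .s, .w _ => true
  | .v i, .t j _ => decide (i ∈ A j)
  | _, _ => false

/-- The gadget position `G_K(C, A)`, where the cells are the elements of `ι`
and the avoider sets are `A j` for `j : κ`. -/
def GPos {ι κ : Type} [Fintype ι] [Fintype κ] [DecidableEq ι] [DecidableEq κ]
    (A : κ → Finset ι) (K : ℕ) : PB (GV ι κ K) :=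
  { verts := Finset.univ
    black := Gblack
    adj := fun x y => Gedge A x y || Gedge A y x }


set_option linter.unusedSectionVars false
namespace PB

variable {V : Type} [DecidableEq V]

lemma verts_move (p : Bool) (P : PB V) (v : V) :
    (move p P v).verts = insert v (P.verts \ P.nbrs v) := rfl

lemma black_move (p : Bool) (P : PB V) (v x : V) :
    (move p P v).black x = if x = v then p else P.black x := rfl

lemma mem_nbrs {P : PB V} {v d : V} :
    d ∈ P.nbrs v ↔ d ∈ P.verts ∧ P.adj v d = true := by
  simp [nbrs]

lemma adj_move_iff (p : Bool) (P : PB V) (v x y : V) :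
    (move p P v).adj x y = true ↔
      x ∈ (move p P v).verts ∧ y ∈ (move p P v).verts ∧ x ≠ y ∧
      (if x = v then (P.adj v y = true ∨ ∃ w ∈ P.nbrs v, P.adj w y = true)
       else if y = v then (P.adj v x = true ∨ ∃ w ∈ P.nbrs v, P.adj w x = true)
       else P.adj x y = true) := by
  show (_ && _ && _ && _) = true ↔ _
  simp only [Bool.and_eq_true, decide_eq_true_eq]
  constructor
  · rintro ⟨⟨⟨h1, h2⟩, h3⟩, h4⟩
    refine ⟨h1, h2, h3, ?_⟩
    split_ifs at h4 ⊢ <;> simp_all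
  · rintro ⟨h1, h2, h3, h4⟩
    refine ⟨⟨⟨h1, h2⟩, h3⟩, ?_⟩
    split_ifs at h4 ⊢ <;> simp_all

lemma adj_move_other {p : Bool} {P : PB V} {v x y : V} (hx : x ≠ v) (hy : y ≠ v) :
    (move p P v).adj x y = true ↔
      x ∈ (move p P v).verts ∧ y ∈ (move p P v).verts ∧ x ≠ y ∧ P.adj x y = true := by
  rw [adj_move_iff]; simp [hx, hy]

lemma adj_move_self {p : Bool} {P : PB V} {v y : V} :
    (move p P v).adj v y = true ↔
      v ∈ (move p P v).verts ∧ y ∈ (move p P v).verts ∧ v ≠ y ∧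
      (P.adj v y = true ∨ ∃ w ∈ P.nbrs v, P.adj w y = true) := by
  rw [adj_move_iff]; simp

lemma move_sym {P : PB V} (hs : ∀ x y, P.adj x y = P.adj y x) (p : Bool) (v : V) :
    ∀ x y, (move p P v).adj x y = (move p P v).adj y x := by
  intro x y
  rw [Bool.eq_iff_iff, adj_move_iff, adj_move_iff]
  constructor <;> rintro ⟨h1, h2, h3, h4⟩ <;> refine ⟨h2, h1, h3.symm, ?_⟩ <;>
    · split_ifs at h4 ⊢ <;> first
      | simp_all
      | (rw [hs] at h4 ⊢ <;> simp_all)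
      | (rw [hs x y] at h4 ⊢ <;> simp_all)
      | (rw [hs y x] at h4 ⊢ <;> simp_all)

lemma move_irr (p : Bool) (P : PB V) (v : V) :
    ∀ x, (move p P v).adj x x = false := by
  intro x
  show (_ && _ && decide (x ≠ x) && _) = false
  simp

lemma move_supp (p : Bool) (P : PB V) (v : V) :
    ∀ x y, (move p P v).adj x y = true →
      x ∈ (move p P v).verts ∧ y ∈ (move p P v).verts := by
  intro x y h
  rw [adj_move_iff] at h
  exact ⟨h.1, h.2.1⟩

end PB
namespace PB
variable {V : Type} [DecidableEq V]

lemma move_irr' (p : Bool) (P : PB V) (v x : V) :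
    (move p P v).adj x x = false := move_irr p P v x

lemma move_proper {P : PB V} (hs : ∀ x y, P.adj x y = P.adj y x)
    (hirr : ∀ x, P.adj x x = false)
    (hsupp : ∀ x y, P.adj x y = true → x ∈ P.verts ∧ y ∈ P.verts)
    (hprop : ∀ x y, P.adj x y = true → P.black x ≠ P.black y)
    {p : Bool} {v : V} (hv : P.black v = !p) :
    ∀ x y, (move p P v).adj x y = true → (move p P v).black x ≠ (move p P v).black y := by
  have key : ∀ y, y ≠ v → (move p P v).adj v y = true → P.black y = p → False := by
    intro y hy hadj hby
    rw [adj_move_self] at hadj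
    obtain ⟨hv1, hy1, -, hdisj⟩ := hadj
    rcases hdisj with h | ⟨d, hd, hdy⟩
    · have : y ∈ P.nbrs v := mem_nbrs.mpr ⟨(hsupp v y h).2, h⟩
      rw [verts_move] at hy1
      rcases Finset.mem_insert.mp hy1 with h' | h'
      · exact hy h'
      · exact (Finset.mem_sdiff.mp h').2 this
    · have hd' := mem_nbrs.mp hd
      have h1 : P.black d ≠ P.black v := (hprop v d hd'.2).symm
      have h2 : P.black d ≠ P.black y := hprop d y hdy
      rw [hv] at h1
      rw [hby] at h2
      cases hb : P.black d <;> rw [hb] at h1 h2 <;> cases p <;> simp_all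
  intro x y hadj
  by_cases hx : x = v
  · have hy : y ≠ v := by
      intro h
      rw [hx, h, move_irr'] at hadj
      exact absurd hadj (by simp)
    rw [black_move, black_move, if_pos hx, if_neg hy]
    intro he
    exact key y hy (hx ▸ hadj) he.symm
  · by_cases hy : y = v
    · rw [move_sym hs] at hadj
      rw [black_move, black_move, if_neg hx, if_pos hy]
      intro he
      exact key x hx (hy ▸ hadj) he
    · rw [adj_move_other hx hy] at hadj
      rw [black_move, black_move, if_neg hx, if_neg hy]
      exact hprop x y hadj.2.2.2

lemma card_move_le {p : Bool} {P : PB V} {v : V} (hv : v ∈ P.verts) :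
    (move p P v).verts.card ≤ P.verts.card := by
  apply Finset.card_le_card
  rw [verts_move]
  intro y hy
  rcases Finset.mem_insert.mp hy with rfl | h
  · exact hv
  · exact (Finset.mem_sdiff.mp h).1

lemma card_move_lt {p : Bool} {P : PB V} {v d : V} (hv : v ∈ P.verts)
    (hirr : ∀ x, P.adj x x = false) (hd : d ∈ P.nbrs v) :
    (move p P v).verts.card + 1 ≤ P.verts.card := by
  have hdv : d ≠ v := by
    rintro rfl
    have h := (mem_nbrs.mp hd).2
    rw [hirr] at h
    exact absurd h (by simp)
  have hsub : (move p P v).verts ⊆ P.verts.erase d := by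
    rw [verts_move]
    intro y hy
    rcases Finset.mem_insert.mp hy with rfl | h
    · exact Finset.mem_erase.mpr ⟨fun he => hdv he.symm, hv⟩
    · obtain ⟨h1, h2⟩ := Finset.mem_sdiff.mp h
      exact Finset.mem_erase.mpr ⟨fun he => h2 (he ▸ hd), h1⟩
  have h1 : 0 < P.verts.card := Finset.card_pos.mpr ⟨d, (mem_nbrs.mp hd).1⟩
  have h2 := Finset.card_le_card hsub
  rw [Finset.card_erase_of_mem (mem_nbrs.mp hd).1] at h2
  omega

lemma single_white {Q : PB V} {z : V} (hv : Q.verts = {z}) (hb : Q.black z = false) :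
    ∀ n, ¬ blackWinsAux n true Q := by
  intro n
  cases n with
  | zero => simp [blackWinsAux, hv, hb]
  | succ m =>
    simp only [blackWinsAux, hv]
    rw [if_pos (by simp)]
    simp [hb]

lemma not_blackWins_step {P : PB V} {v : V} (h2 : 1 < P.verts.card)
    (hleg : legal false P v)
    (h : ¬ blackWinsAux (P.verts.card - 1) true (move false P v)) :
    ¬ blackWins false P := by
  unfold blackWins
  obtain ⟨m, hm⟩ : ∃ m, P.verts.card = m + 1 := ⟨P.verts.card - 1, by omega⟩
  rw [hm]
  simp only [blackWinsAux]
  rw [if_neg (by omega)]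
  simp only [Bool.false_eq_true, if_false]
  intro hall
  exact h (by rw [hm]; simpa using hall v hleg)

end PB
namespace PB
variable {V : Type} [DecidableEq V]

/-- A position, Black to move, in which White wins: a black hub `h` adjacent to
every white vertex, black "leaves" `L` (the non-hub black vertices), each with at
least one neighbor, and a reserve `F` of at least `|L| + 2` white vertices whose
only neighbor is the hub. -/
structure GoodPos (P : PB V) (h : V) (L F : Finset V) : Prop where
  sym : ∀ x y, P.adj x y = P.adj y x
  irr : ∀ x, P.adj x x = false
  supp : ∀ x y, P.adj x y = true → x ∈ P.verts ∧ y ∈ P.verts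
  prop : ∀ x y, P.adj x y = true → P.black x ≠ P.black y
  hmem : h ∈ P.verts
  hblack : P.black h = true
  Lsub : L ⊆ P.verts
  hnotL : h ∉ L
  blacks : ∀ x ∈ P.verts, P.black x = true → x = h ∨ x ∈ L
  Lblack : ∀ b ∈ L, P.black b = true
  whiteadj : ∀ w ∈ P.verts, P.black w = false → P.adj h w = true
  leafnbr : ∀ b ∈ L, ∃ w, P.adj b w = true
  Fsub : F ⊆ P.verts
  Ffree : ∀ f ∈ F, P.black f = false ∧ ∀ y, P.adj f y = true → y = h
  Fcard : L.card + 2 ≤ F.card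

lemma good_not_blackWins :
    ∀ n (P : PB V) (h : V) (L F : Finset V), P.verts.card ≤ n → GoodPos P h L F →
      ¬ blackWinsAux n true P := by
  intro n
  induction n using Nat.strong_induction_on with
  | _ n IH =>
  intro P h L F hcard G
  -- basic cardinality facts
  have hFh : h ∉ F := fun hf => by
    have := (G.Ffree h hf).1; rw [G.hblack] at this; exact absurd this (by simp)
  have hFsub : insert h F ⊆ P.verts := by
    intro y hy; rcases Finset.mem_insert.mp hy with rfl | hy
    · exact G.hmem
    · exact G.Fsub hy
  have hcard3 : L.card + 3 ≤ P.verts.card := by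
    have h1 := Finset.card_le_card hFsub
    rw [Finset.card_insert_of_notMem hFh] at h1
    have := G.Fcard; omega
  obtain ⟨n₁, rfl⟩ : ∃ m, n = m + 1 := ⟨n - 1, by omega⟩
  simp only [blackWinsAux]
  rw [if_neg (by omega), if_pos trivial]
  rintro ⟨x, hleg, hwin⟩
  obtain ⟨-, hxv, hxw⟩ := hleg
  rw [show (!true) = false from rfl] at hxw
  have hhx : h ≠ x := fun he => by rw [← he, G.hblack] at hxw; exact absurd hxw (by simp)
  have hadjhx : P.adj h x = true := G.whiteadj x hxv hxw
  have hhnb : h ∈ P.nbrs x := mem_nbrs.mpr ⟨G.hmem, by rw [G.sym]; exact hadjhx⟩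
  set P' := move true P x with hP'
  -- facts about P'
  have sym' := move_sym G.sym true x
  have irr' := move_irr true P x
  have supp' := move_supp true P x
  have prop' := move_proper G.sym G.irr G.supp G.prop (p := true) (v := x) (by simp [hxw])
  have nbrsblack : ∀ d ∈ P.nbrs x, P.black d = true := by
    intro d hd
    have := G.prop x d (mem_nbrs.mp hd).2
    rw [hxw] at this
    cases hb : P.black d
    · rw [hb] at this; exact absurd rfl this
    · rfl
  have mem_verts' : ∀ y, y ∈ P'.verts ↔ y = x ∨ (y ∈ P.verts ∧ y ∉ P.nbrs x) := by
    intro y; rw [hP', verts_move]; simp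
  have hxmem' : x ∈ P'.verts := (mem_verts' x).mpr (Or.inl rfl)
  have whitesurv : ∀ w, w ∈ P.verts → P.black w = false → w ∈ P'.verts := by
    intro w hw hbw
    rcases eq_or_ne w x with rfl | hne
    · exact hxmem'
    · refine (mem_verts' w).mpr (Or.inr ⟨hw, fun hn => ?_⟩)
      rw [nbrsblack w hn] at hbw; exact absurd hbw (by simp)
  have hmem'' : h ∉ P'.verts := by
    intro hmem
    rcases (mem_verts' h).mp hmem with he | ⟨-, hn⟩
    · exact hhx he
    · exact hn hhnb
  have black' : ∀ y, P'.black y = if y = x then true else P.black y := fun y => rfl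
  have hstar' : ∀ w ∈ P'.verts, w ≠ x → P.black w = false → P'.adj x w = true := by
    intro w hw hne hbw
    have hwP : w ∈ P.verts := by
      rcases (mem_verts' w).mp hw with he | ⟨h1, -⟩
      · exact absurd he hne
      · exact h1
    exact adj_move_self.mpr ⟨hxmem', hw, Ne.symm hne,
      Or.inr ⟨h, hhnb, G.whiteadj w hwP hbw⟩⟩
  -- card bounds
  have hcard' : P'.verts.card + 1 ≤ P.verts.card := card_move_lt hxv G.irr hhnb
  have hFx : F.erase x ⊆ P'.verts := by
    intro f hf
    obtain ⟨hfx, hfF⟩ := Finset.mem_erase.mp hf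
    exact whitesurv f (G.Fsub hfF) (G.Ffree f hfF).1
  have hcard2' : 2 ≤ P'.verts.card := by
    have h1 : insert x (F.erase x) ⊆ P'.verts := by
      intro y hy; rcases Finset.mem_insert.mp hy with rfl | hy
      · exact hxmem'
      · exact hFx hy
    have h2 := Finset.card_le_card h1
    rw [Finset.card_insert_of_notMem (Finset.notMem_erase x F)] at h2
    have h3 : F.card - 1 ≤ (F.erase x).card := Finset.pred_card_le_card_erase
    have := G.Fcard
    omega
  obtain ⟨n₂, rfl⟩ : ∃ m, n₁ = m + 1 := ⟨n₁ - 1, by omega⟩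
  simp only [blackWinsAux] at hwin
  rw [if_neg (by omega)] at hwin
  simp only [Bool.false_eq_true, if_false] at hwin
  set L' := L.filter (fun b => b ∉ P.nbrs x) with hL'
  rcases Finset.eq_empty_or_nonempty L' with hLe | ⟨b, hb⟩
  · -- Black's move produced a star: White kills the hub.
    have hleg' : legal false P' x := ⟨by omega, hxmem', by rw [black' x, if_pos rfl]; rfl⟩
    have hsd : P'.verts \ P'.nbrs x ⊆ {x} := by
      intro y hy
      obtain ⟨hy1, hy2⟩ := Finset.mem_sdiff.mp hy
      rcases eq_or_ne y x with rfl | hne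
      · exact Finset.mem_singleton_self y
      exfalso
      have hyP : y ∈ P.verts ∧ y ∉ P.nbrs x := by
        rcases (mem_verts' y).mp hy1 with he | h1
        · exact absurd he hne
        · exact h1
      have hbw : P.black y = false := by
        cases hby : P.black y
        · rfl
        · rcases G.blacks y hyP.1 hby with rfl | hyL
          · exact absurd (absurd hy1 hmem'') (fun h => h)
          · have : y ∈ L' := Finset.mem_filter.mpr ⟨hyL, hyP.2⟩
            rw [hLe] at this; exact absurd this (Finset.notMem_empty y)
      exact hy2 (mem_nbrs.mpr ⟨hy1, hstar' y hy1 hne hbw⟩)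
    have hverts'' : (move false P' x).verts = {x} := by
      rw [verts_move]
      apply Finset.Subset.antisymm
      · intro y hy
        rcases Finset.mem_insert.mp hy with rfl | hy
        · exact Finset.mem_singleton_self y
        · exact hsd hy
      · intro y hy
        rw [Finset.mem_singleton] at hy
        subst hy
        exact Finset.mem_insert_self y _
    exact single_white hverts'' (by rw [black_move, if_pos rfl]) n₂ (hwin x hleg')
  · -- there is a surviving black leaf: White plays it.
    obtain ⟨hbL, hbnb⟩ := Finset.mem_filter.mp hb
    have hbblack : P.black b = true := G.Lblack b hbL
    have hbx : b ≠ x := fun he => by rw [he, hxw] at hbblack; exact absurd hbblack (by simp)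
    have hbP : b ∈ P.verts := G.Lsub hbL
    have hbmem' : b ∈ P'.verts := (mem_verts' b).mpr (Or.inr ⟨hbP, hbnb⟩)
    have hbblack' : P'.black b = true := by rw [black' b, if_neg hbx]; exact hbblack
    have hleg' : legal false P' b := ⟨by omega, hbmem', by rw [hbblack']; rfl⟩
    -- x is not adjacent to b in P'
    have hadj'xb : ¬ P'.adj x b = true := by
      intro hadj
      rcases (adj_move_iff true P x x b).mp hadj with ⟨-, -, -, hd⟩
      rw [if_pos rfl] at hd
      rcases hd with h1 | ⟨d, hd1, hd2⟩
      · exact hbnb (mem_nbrs.mpr ⟨hbP, h1⟩)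
      · have := G.prop d b hd2
        rw [nbrsblack d hd1, hbblack] at this
        exact this rfl
    have hadj'bx : ¬ P'.adj b x = true := by rw [sym' b x]; exact hadj'xb
    -- members of P'.nbrs b are P-whites distinct from x
    have nbrs'b : ∀ d ∈ P'.nbrs b, d ≠ x ∧ d ∈ P.verts ∧ P.black d = false ∧ P.adj b d = true := by
      intro d hd
      obtain ⟨hd1, hd2⟩ := mem_nbrs.mp hd
      have hdx : d ≠ x := fun he => hadj'bx (he ▸ hd2)
      have hd3 := (adj_move_other hbx hdx).mp hd2
      have hdP : d ∈ P.verts := (G.supp b d hd3.2.2.2).2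
      have hdw : P.black d = false := by
        have := G.prop b d hd3.2.2.2
        rw [hbblack] at this
        cases hc : P.black d
        · rfl
        · rw [hc] at this; exact absurd rfl this
      exact ⟨hdx, hdP, hdw, hd3.2.2.2⟩
    -- b has a neighbor in P'
    obtain ⟨w1, hw1⟩ := G.leafnbr b hbL
    have hw1P : w1 ∈ P.verts := (G.supp b w1 hw1).2
    have hw1w : P.black w1 = false := by
      have := G.prop b w1 hw1
      rw [hbblack] at this
      cases hc : P.black w1
      · rfl
      · rw [hc] at this; exact absurd rfl this
    have hw1x : w1 ≠ x := by
      rintro rfl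
      exact hbnb (mem_nbrs.mpr ⟨hbP, by rw [G.sym]; exact hw1⟩)
    have hw1mem' : w1 ∈ P'.verts := whitesurv w1 hw1P hw1w
    have hbw1 : b ≠ w1 := fun he => by
      rw [← he] at hw1w; rw [hbblack] at hw1w; exact absurd hw1w (by simp)
    have hadj'bw1 : P'.adj b w1 = true :=
      (adj_move_other hbx hw1x).mpr ⟨hbmem', hw1mem', hbw1, hw1⟩
    have hw1nb : w1 ∈ P'.nbrs b := mem_nbrs.mpr ⟨hw1mem', hadj'bw1⟩
    set P'' := move false P' b with hP''
    -- basic structure of P''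
    have sym'' := move_sym sym' false b
    have irr'' := move_irr false P' b
    have supp'' := move_supp false P' b
    have prop'' := move_proper sym' irr' supp' prop' (p := false) (v := b)
      (by rw [hbblack']; rfl)
    have mem_verts'' : ∀ y, y ∈ P''.verts ↔ y = b ∨ (y ∈ P'.verts ∧ y ∉ P'.nbrs b) := by
      intro y; rw [hP'', verts_move]; simp
    have black'' : ∀ y, P''.black y = if y = b then false else P'.black y := fun y => rfl
    have hxmem'' : x ∈ P''.verts := by
      refine (mem_verts'' x).mpr (Or.inr ⟨hxmem', fun hn => ?_⟩)
      exact hadj'bx (mem_nbrs.mp hn).2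
    have hbmem'' : b ∈ P''.verts := (mem_verts'' b).mpr (Or.inl rfl)
    have hxblack'' : P''.black x = true := by
      rw [black'' x, if_neg (Ne.symm hbx), black' x, if_pos rfl]
    -- the new leaf and free sets
    set L'' := L'.erase b with hL''
    set F'' := F.erase x with hF''
    have hL''sub : ∀ b' ∈ L'', b' ∈ L ∧ b' ∉ P.nbrs x ∧ b' ≠ b ∧ b' ∈ P'.verts ∧
        b' ∉ P'.nbrs b ∧ P.black b' = true := by
      intro b' hb'
      obtain ⟨hb'b, hb'L'⟩ := Finset.mem_erase.mp hb'
      obtain ⟨hb'L, hb'nb⟩ := Finset.mem_filter.mp hb'L'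
      have hb'bl : P.black b' = true := G.Lblack b' hb'L
      have hb'x : b' ≠ x := fun he => by
        rw [he, hxw] at hb'bl; exact absurd hb'bl (by simp)
      have hb'mem' : b' ∈ P'.verts := (mem_verts' b').mpr (Or.inr ⟨G.Lsub hb'L, hb'nb⟩)
      refine ⟨hb'L, hb'nb, hb'b, hb'mem', fun hn => ?_, hb'bl⟩
      · obtain ⟨-, -, hd3, -⟩ := nbrs'b b' hn
        rw [hb'bl] at hd3; exact absurd hd3 (by simp)
    -- every P''-white other than b is a surviving P-white
    have white'' : ∀ w ∈ P''.verts, w ≠ b → P''.black w = false →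
        w ≠ x ∧ w ∈ P'.verts ∧ w ∉ P'.nbrs b ∧ P.black w = false ∧ w ∈ P.verts := by
      intro w hw hwb hww
      rw [black'' w, if_neg hwb] at hww
      have hwx : w ≠ x := fun he => by
        rw [he, black' x, if_pos rfl] at hww; exact absurd hww (by simp)
      rw [black' w, if_neg hwx] at hww
      have hmem : w ∈ P'.verts ∧ w ∉ P'.nbrs b := by
        rcases (mem_verts'' w).mp hw with he | h1
        · exact absurd he hwb
        · exact h1
      have hwP : w ∈ P.verts := by
        rcases (mem_verts' w).mp hmem.1 with he | h1
        · exact absurd he hwx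
        · exact h1.1
      exact ⟨hwx, hmem.1, hmem.2, hww, hwP⟩
    -- x is adjacent in P'' to every P''-white
    have hadj''bx : P''.adj b x = true := by
      refine adj_move_self.mpr ⟨hbmem'', hxmem'', hbx, Or.inr ⟨w1, hw1nb, ?_⟩⟩
      rw [sym' w1 x]
      exact hstar' w1 hw1mem' hw1x hw1w
    have whiteadj'' : ∀ w ∈ P''.verts, P''.black w = false → P''.adj x w = true := by
      intro w hw hww
      rcases eq_or_ne w b with rfl | hwb
      · rw [sym'' x w]; exact hadj''bx
      · obtain ⟨hwx, hw', hwnb, hwbl, hwP⟩ := white'' w hw hwb hww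
        exact (adj_move_other (Ne.symm hbx) hwb).mpr
          ⟨hxmem'', hw, Ne.symm hwx, hstar' w hw' hwx hwbl⟩
    -- GoodPos for P''
    have G'' : GoodPos P'' x L'' F'' := by
      refine ⟨sym'', irr'', supp'', prop'', hxmem'', hxblack'', ?_, ?_, ?_, ?_, whiteadj'',
        ?_, ?_, ?_, ?_⟩
      · -- Lsub
        intro b' hb'
        obtain ⟨-, -, hb'b, hb'm, hb'nb, -⟩ := hL''sub b' hb'
        exact (mem_verts'' b').mpr (Or.inr ⟨hb'm, hb'nb⟩)
      · -- hnotL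
        intro hxL
        obtain ⟨hxL, -, -, -, -, hbl⟩ := hL''sub x hxL
        rw [hxw] at hbl; exact absurd hbl (by simp)
      · -- blacks
        intro z hz hzb
        rw [black'' z] at hzb
        have hzb' : z ≠ b := by
          intro he; rw [if_pos he] at hzb; exact absurd hzb (by simp)
        rw [if_neg hzb', black' z] at hzb
        rcases eq_or_ne z x with rfl | hzx
        · exact Or.inl rfl
        rw [if_neg hzx] at hzb
        right
        have hzmem : z ∈ P'.verts ∧ z ∉ P'.nbrs b := by
          rcases (mem_verts'' z).mp hz with he | h1
          · exact absurd he hzb'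
          · exact h1
        have hzP : z ∈ P.verts ∧ z ∉ P.nbrs x := by
          rcases (mem_verts' z).mp hzmem.1 with he | h1
          · exact absurd he hzx
          · exact h1
        rcases G.blacks z hzP.1 hzb with rfl | hzL
        · exact absurd hzmem.1 hmem''
        · exact Finset.mem_erase.mpr ⟨hzb', Finset.mem_filter.mpr ⟨hzL, hzP.2⟩⟩
      · -- Lblack
        intro b' hb'
        obtain ⟨-, -, hb'b, -, -, hbl⟩ := hL''sub b' hb'
        have hb'x : b' ≠ x := fun he => by
          rw [he, hxw] at hbl; exact absurd hbl (by simp)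
        rw [black'' b', if_neg hb'b, black' b', if_neg hb'x]
        exact hbl
      · -- leafnbr
        intro b' hb'
        obtain ⟨hb'L, hb'nbx, hb'b, hb'm, hb'nb, hbl⟩ := hL''sub b' hb'
        obtain ⟨w2, hw2⟩ := G.leafnbr b' hb'L
        have hw2P : w2 ∈ P.verts := (G.supp b' w2 hw2).2
        have hw2w : P.black w2 = false := by
          have := G.prop b' w2 hw2
          rw [hbl] at this
          cases hc : P.black w2
          · rfl
          · rw [hc] at this; exact absurd rfl this
        have hw2x : w2 ≠ x := by
          rintro rfl
          exact hb'nbx (mem_nbrs.mpr ⟨G.Lsub hb'L, by rw [G.sym]; exact hw2⟩)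
        have hb'x : b' ≠ x := fun he => by
          rw [he, hxw] at hbl; exact absurd hbl (by simp)
        have hw2m' : w2 ∈ P'.verts := whitesurv w2 hw2P hw2w
        have hb'w2 : b' ≠ w2 := fun he => by
          rw [← he, hbl] at hw2w; exact absurd hw2w (by simp)
        have hadj'b'w2 : P'.adj b' w2 = true :=
          (adj_move_other hb'x hw2x).mpr ⟨hb'm, hw2m', hb'w2, hw2⟩
        by_cases hw2nb : w2 ∈ P'.nbrs b
        · -- w2 is deleted by White's move; b' becomes adjacent to b
          refine ⟨b, ?_⟩
          rw [sym'' b' b]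
          refine adj_move_self.mpr ⟨hbmem'', ?_, Ne.symm hb'b, Or.inr ⟨w2, hw2nb, ?_⟩⟩
          · exact (mem_verts'' b').mpr (Or.inr ⟨hb'm, hb'nb⟩)
          · rw [sym' w2 b']; exact hadj'b'w2
        · refine ⟨w2, (adj_move_other hb'b ?_).mpr
            ⟨(mem_verts'' b').mpr (Or.inr ⟨hb'm, hb'nb⟩),
             (mem_verts'' w2).mpr (Or.inr ⟨hw2m', hw2nb⟩), hb'w2, hadj'b'w2⟩⟩
          rintro rfl
          rw [hbblack] at hw2w; exact absurd hw2w (by simp)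
      · -- Fsub
        intro f hf
        obtain ⟨hfx, hfF⟩ := Finset.mem_erase.mp hf
        obtain ⟨hfw, hffree⟩ := G.Ffree f hfF
        have hfm' : f ∈ P'.verts := whitesurv f (G.Fsub hfF) hfw
        have hfnb : f ∉ P'.nbrs b := fun hn => by
          obtain ⟨-, -, -, hd4⟩ := nbrs'b f hn
          have := hffree b (by rw [G.sym]; exact hd4)
          exact G.hnotL (this ▸ hbL)
        exact (mem_verts'' f).mpr (Or.inr ⟨hfm', hfnb⟩)
      · -- Ffree
        intro f hf
        obtain ⟨hfx, hfF⟩ := Finset.mem_erase.mp hf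
        obtain ⟨hfw, hffree⟩ := G.Ffree f hfF
        have hfb : f ≠ b := fun he => by
          rw [← he, hfw] at hbblack; exact absurd hbblack (by simp)
        constructor
        · rw [black'' f, if_neg hfb, black' f, if_neg hfx]; exact hfw
        · intro y hy
          rcases eq_or_ne y b with rfl | hyb
          · exfalso
            rw [sym'' f y] at hy
            rcases adj_move_self.mp hy with ⟨-, -, -, h1 | ⟨d, hd1, hd2⟩⟩
            · obtain ⟨-, -, -, hd4⟩ := nbrs'b f (mem_nbrs.mpr
                ⟨whitesurv f (G.Fsub hfF) hfw, h1⟩)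
              have := hffree y (by rw [G.sym]; exact hd4)
              exact G.hnotL (this ▸ hbL)
            · obtain ⟨hdx, hdP, hdw, -⟩ := nbrs'b d hd1
              have hadjdf := (adj_move_other hdx hfx).mp hd2
              have hdh : d = h := hffree d (by rw [G.sym]; exact hadjdf.2.2.2)
              rw [hdh, G.hblack] at hdw
              exact absurd hdw (by simp)
          · have h1 := (adj_move_other hfb hyb).mp hy
            rcases eq_or_ne y x with rfl | hyx
            · rfl
            exfalso
            have h2 := (adj_move_other hfx hyx).mp h1.2.2.2
            have := hffree y h2.2.2.2
            subst this
            exact hmem'' h2.2.1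
      · -- Fcard
        have h1 : L''.card = L'.card - 1 := by rw [hL'', Finset.card_erase_of_mem hb]
        have h2 : L'.card ≤ L.card := Finset.card_filter_le _ _
        have h3 : F.card - 1 ≤ F''.card := Finset.pred_card_le_card_erase
        have h4 : 1 ≤ L'.card := Finset.card_pos.mpr ⟨b, hb⟩
        have := G.Fcard
        omega
    -- fuel bookkeeping and the inductive hypothesis
    have hcard'' : P''.verts.card + 1 ≤ P'.verts.card := card_move_lt hbmem' irr' hw1nb
    exact IH n₂ (by omega) P'' x L'' F'' (by omega) G'' (hwin b hleg')

end PB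
namespace PB
variable {V : Type} [DecidableEq V]

lemma star_kill {P : PB V} {c z : V} (hzc : z ≠ c) (hc : c ∈ P.verts) (hz : z ∈ P.verts)
    (hb : P.black c = true) (hirr : ∀ x, P.adj x x = false)
    (hstar : ∀ y ∈ P.verts, y ≠ c → P.adj c y = true) : ¬ blackWins false P := by
  have h2 : 1 < P.verts.card := Finset.one_lt_card.mpr ⟨c, hc, z, hz, Ne.symm hzc⟩
  apply not_blackWins_step h2 ⟨h2, hc, by rw [hb]; rfl⟩
  refine single_white (z := c) ?_ (by rw [black_move, if_pos rfl]) _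
  rw [verts_move]
  apply Finset.Subset.antisymm
  · intro y hy
    rcases Finset.mem_insert.mp hy with rfl | hy
    · exact Finset.mem_singleton_self y
    · obtain ⟨hy1, hy2⟩ := Finset.mem_sdiff.mp hy
      rcases eq_or_ne y c with rfl | hne
      · exact Finset.mem_singleton_self y
      · exact absurd (mem_nbrs.mpr ⟨hy1, hstar y hy1 hne⟩) hy2
  · intro y hy
    rw [Finset.mem_singleton] at hy
    subst hy
    exact Finset.mem_insert_self y _

end PB

set_option maxHeartbeats 2000000 in
open PB in
/-- black shenanigans: in `G_K(C, A)` with `A` nonempty,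
`K ≥ |C| + 2` and Black to move, if Black moves anywhere other than a vertex
of type `u` (namely at `s` or at some `t j k`), then White wins the resulting
position. -/
theorem paintbucket_black_shenanigans
    {ι κ : Type} [Fintype ι] [Fintype κ] [DecidableEq ι] [DecidableEq κ]
    [Nonempty κ]
    (A : κ → Finset ι) (K : ℕ) (hK : Fintype.card ι + 2 ≤ K)
    (x : GV ι κ K) (hx : x = GV.s ∨ ∃ j k, x = GV.t j k) :
    ¬ blackWins false (move true (GPos A K) x) := by
  have hK0 : 0 < K := by omega
  set G := GPos A K with hG
  have Gsym : ∀ a b, G.adj a b = G.adj b a := fun a b => Bool.or_comm _ _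
  have Girr : ∀ a, G.adj a a = false := by
    intro a; rcases a <;> simp [hG, GPos, Gedge]
  have Gmemn : ∀ a b, b ∈ G.nbrs a ↔ G.adj a b = true := by
    intro a b; rw [mem_nbrs]; simp [hG, GPos]
  have Gblack' : ∀ a, G.black a = Gblack a := fun a => rfl
  rcases hx with rfl | ⟨j, k, rfl⟩
  · -- Black moved at s: the result is a star with center s.
    set P1 := move true G GV.s with hP1
    have mem1 : ∀ y, y ∈ P1.verts ↔ y = GV.s ∨ G.adj GV.s y = false := by
      intro y
      rw [hP1, verts_move]
      simp only [Finset.mem_insert, Finset.mem_sdiff, Gmemn]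
      constructor
      · rintro (rfl | ⟨-, h⟩)
        · exact Or.inl rfl
        · exact Or.inr (by cases hh : G.adj GV.s y; rfl; exact absurd hh h)
      · rintro (rfl | h)
        · exact Or.inl rfl
        · exact Or.inr ⟨by simp [hG, GPos], by simp [h]⟩
    have hz : (GV.t (Classical.arbitrary κ) ⟨0, hK0⟩ : GV ι κ K) ∈ P1.verts :=
      (mem1 _).mpr (Or.inr (by simp [hG, GPos, Gedge]))
    refine star_kill (z := GV.t (Classical.arbitrary κ) ⟨0, hK0⟩) (by simp)
      ((mem1 _).mpr (Or.inl rfl)) hz (by rw [black_move, if_pos rfl]) (move_irr _ _ _) ?_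
    intro y hy hys
    have hadj : G.adj GV.s y = false := by
      rcases (mem1 y).mp hy with rfl | h
      · exact absurd rfl hys
      · exact h
    have hsmem : GV.s ∈ P1.verts := (mem1 _).mpr (Or.inl rfl)
    rcases y with i | i | k' | ⟨j', k'⟩ | _ | _
    · exact absurd hadj (by simp [hG, GPos, Gedge])
    · exact adj_move_self.mpr ⟨hsmem, hy, by simp, Or.inr ⟨GV.r,
        (Gmemn _ _).mpr (by simp [hG, GPos, Gedge]), by simp [hG, GPos, Gedge]⟩⟩
    · exact absurd hadj (by simp [hG, GPos, Gedge])
    · exact adj_move_self.mpr ⟨hsmem, hy, by simp, Or.inr ⟨GV.w ⟨0, hK0⟩,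
        (Gmemn _ _).mpr (by simp [hG, GPos, Gedge]), by simp [hG, GPos, Gedge]⟩⟩
    · exact absurd hadj (by simp [hG, GPos, Gedge])
    · exact absurd rfl hys
  · -- Black moved at t j k
    have Gsupp : ∀ a b, G.adj a b = true → a ∈ G.verts ∧ b ∈ G.verts := by
      intro a b _; constructor <;> simp [hG, GPos]
    have Gprop : ∀ a b, G.adj a b = true → G.black a ≠ G.black b := by
      intro a b h
      rcases a <;> rcases b <;>
        first
        | (exfalso; simp [hG, GPos, Gedge] at h; done)
        | (simp [hG, GPos, Gblack])
    set T : GV ι κ K := GV.t j k with hT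
    set P1 := move true G T with hP1
    have mem1 : ∀ y, y ∈ P1.verts ↔ y = T ∨ G.adj T y = false := by
      intro y
      rw [hP1, verts_move]
      simp only [Finset.mem_insert, Finset.mem_sdiff, Gmemn]
      constructor
      · rintro (rfl | ⟨-, h⟩)
        · exact Or.inl rfl
        · exact Or.inr (by cases hh : G.adj T y; rfl; exact absurd hh h)
      · rintro (rfl | h)
        · exact Or.inl rfl
        · exact Or.inr ⟨by simp [hG, GPos], by simp [h]⟩
    have hTmem : T ∈ P1.verts := (mem1 _).mpr (Or.inl rfl)
    have hsmem1 : GV.s ∈ P1.verts := (mem1 _).mpr (Or.inr (by simp [hG, GPos, Gedge, hT]))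
    have humem1 : ∀ i, GV.u i ∈ P1.verts := fun i =>
      (mem1 _).mpr (Or.inr (by simp [hG, GPos, Gedge, hT]))
    have htmem1 : ∀ j' k', GV.t j' k' ∈ P1.verts := fun j' k' =>
      (mem1 _).mpr (Or.inr (by simp [hG, GPos, Gedge, hT]))
    have hvmem1 : ∀ i, i ∉ A j → GV.v i ∈ P1.verts := fun i hi =>
      (mem1 _).mpr (Or.inr (by simp [hG, GPos, Gedge, hT, hi]))
    have a1u : ∀ i, P1.adj T (GV.u i) = true := by
      intro i
      exact adj_move_self.mpr ⟨hTmem, humem1 i, by simp [hT], Or.inr ⟨GV.r,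
        (Gmemn _ _).mpr (by simp [hG, GPos, Gedge, hT]), by simp [hG, GPos, Gedge]⟩⟩
    have a1s : P1.adj T GV.s = true := by
      exact adj_move_self.mpr ⟨hTmem, hsmem1, by simp [hT], Or.inr ⟨GV.w ⟨0, hK0⟩,
        (Gmemn _ _).mpr (by simp [hG, GPos, Gedge, hT]), by simp [hG, GPos, Gedge]⟩⟩
    have a1t : ∀ j' k', GV.t j' k' ≠ T → P1.adj T (GV.t j' k') = true := by
      intro j' k' hne
      exact adj_move_self.mpr ⟨hTmem, htmem1 j' k', Ne.symm hne, Or.inr ⟨GV.w ⟨0, hK0⟩,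
        (Gmemn _ _).mpr (by simp [hG, GPos, Gedge, hT]), by simp [hG, GPos, Gedge]⟩⟩
    have sym1 := move_sym Gsym true T
    have irr1 := move_irr true G T
    have supp1 := move_supp true G T
    have prop1 := move_proper Gsym Girr Gsupp Gprop (p := true) (v := T)
      (by simp [hG, GPos, hT, Gblack', Gblack])
    have a1Tv : ∀ i, i ∉ A j → ¬ P1.adj T (GV.v i) = true := by
      intro i hi hadj
      rcases adj_move_self.mp hadj with ⟨-, -, -, h1 | ⟨d, hd1, hd2⟩⟩
      · rw [show G.adj T (GV.v i) = false by simp [hG, GPos, Gedge, hT, hi]] at h1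
        exact absurd h1 (by simp)
      · rw [Gmemn] at hd1
        rcases d with i' | i' | k'' | ⟨j'', k''⟩ | _ | _ <;>
          first
          | (simp [hG, GPos, Gedge, hT] at hd1; done)
          | (simp [hG, GPos, Gedge] at hd2; done)
    by_cases hall : ∀ i, i ∈ A j
    · -- A j is everything: P1 is a star with center T
      refine star_kill (z := GV.s) (by simp [hT]) hTmem hsmem1
        (by rw [black_move, if_pos rfl]) irr1 ?_
      intro y hy hyT
      have hadj : G.adj T y = false := by
        rcases (mem1 y).mp hy with rfl | h
        · exact absurd rfl hyT
        · exact h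
      rcases y with i | i | k' | ⟨j', k'⟩ | _ | _
      · exact absurd hadj (by simp [hG, GPos, Gedge, hT, hall i])
      · exact a1u i
      · exact absurd hadj (by simp [hG, GPos, Gedge, hT])
      · exact a1t j' k' hyT
      · exact absurd hadj (by simp [hG, GPos, Gedge, hT])
      · exact a1s
    · -- some i0 is not in A j : White replies at v i0
      push_neg at hall
      obtain ⟨i0, hi0⟩ := hall
      set v0 : GV ι κ K := GV.v i0 with hv0
      have hv0T : v0 ≠ T := by simp [hv0, hT]
      have hv0mem1 : v0 ∈ P1.verts := hvmem1 i0 hi0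
      have hcard1 : 1 < P1.verts.card :=
        Finset.one_lt_card.mpr ⟨T, hTmem, GV.s, hsmem1, by simp [hT]⟩
      have hbl1 : ∀ y, P1.black y = if y = T then true else Gblack y := fun y => rfl
      have hleg1 : legal false P1 v0 :=
        ⟨hcard1, hv0mem1, by rw [hbl1, if_neg hv0T]; rfl⟩
      apply not_blackWins_step hcard1 hleg1
      set P2 := move false P1 v0 with hP2
      have hsnb : GV.s ∈ P1.nbrs v0 := by
        refine mem_nbrs.mpr ⟨hsmem1, (adj_move_other hv0T (by simp [hT])).mpr
          ⟨hv0mem1, hsmem1, by simp [hv0], by simp [hG, GPos, Gedge, hv0]⟩⟩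
      -- the shape of P1-neighborhoods of v0
      have n1v0 : ∀ d, d ∈ P1.nbrs v0 → d ∈ P1.verts ∧
          (d = GV.u i0 ∨ d = GV.s ∨ ∃ j' k', d = GV.t j' k' ∧ i0 ∈ A j') := by
        intro d hd
        obtain ⟨hd1, hd2⟩ := mem_nbrs.mp hd
        refine ⟨hd1, ?_⟩
        have hdT : d ≠ T := by
          rintro rfl
          rw [sym1] at hd2
          exact a1Tv i0 hi0 hd2
        have h3 := ((adj_move_other hv0T hdT).mp hd2).2.2.2
        rcases d with i' | i' | k'' | ⟨j'', k''⟩ | _ | _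
        · exact absurd h3 (by simp [hG, GPos, Gedge, hv0])
        · simp only [hG, GPos, Gedge, hv0] at h3
          simp only [Bool.or_eq_true, decide_eq_true_eq] at h3
          rcases h3 with h3 | h3
          · exact Or.inl (by rw [h3])
          · exact absurd h3 (by simp [Gedge] at h3)
        · exact absurd h3 (by simp [hG, GPos, Gedge, hv0])
        · refine Or.inr (Or.inr ⟨j'', k'', rfl, ?_⟩)
          simp only [hG, GPos, Gedge, hv0] at h3
          simp only [Bool.or_eq_true, decide_eq_true_eq] at h3
          rcases h3 with h3 | h3
          · exact h3
          · exact absurd h3 (by simp [Gedge] at h3)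
        · exact absurd h3 (by simp [hG, GPos, Gedge, hv0])
        · exact Or.inr (Or.inl rfl)
      have sym2 := move_sym sym1 false v0
      have irr2 := move_irr false P1 v0
      have supp2 := move_supp false P1 v0
      have prop2 := move_proper sym1 irr1 supp1 prop1 (p := false) (v := v0)
        (by rw [hbl1, if_neg hv0T]; rfl)
      have mem2 : ∀ y, y ∈ P2.verts ↔ y = v0 ∨ (y ∈ P1.verts ∧ y ∉ P1.nbrs v0) := by
        intro y; rw [hP2, verts_move]; simp
      have hbl2 : ∀ y, P2.black y = if y = v0 then false
          else if y = T then true else Gblack y := fun y => rfl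
      have hTmem2 : T ∈ P2.verts := by
        refine (mem2 T).mpr (Or.inr ⟨hTmem, fun hn => ?_⟩)
        rcases (n1v0 T hn).2 with h | h | ⟨j', k', he, hj'⟩
        · exact absurd h (by simp [hT])
        · exact absurd h (by simp [hT])
        · rw [hT] at he
          injection he with h1 h2
          exact hi0 (by rw [h1]; exact hj')
      have hv0mem2 : v0 ∈ P2.verts := (mem2 v0).mpr (Or.inl rfl)
      have humem2 : ∀ i, i ≠ i0 → GV.u i ∈ P2.verts := by
        intro i hi
        refine (mem2 _).mpr (Or.inr ⟨humem1 i, fun hn => ?_⟩)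
        rcases (n1v0 _ hn).2 with h | h | ⟨j', k', he, hj'⟩
        · exact hi (by injection h)
        · exact absurd h (by simp)
        · exact absurd he (by simp)
      have hvmem2 : ∀ i, i ∉ A j → GV.v i ∈ P2.verts := by
        intro i hi
        refine (mem2 _).mpr (Or.inr ⟨hvmem1 i hi, fun hn => ?_⟩)
        rcases (n1v0 _ hn).2 with h | h | ⟨j', k', he, hj'⟩
        · exact absurd h (by simp)
        · exact absurd h (by simp)
        · exact absurd he (by simp)
      have htmem2 : ∀ k', k' ≠ k → GV.t j k' ∈ P2.verts := by
        intro k' hk'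
        refine (mem2 _).mpr (Or.inr ⟨htmem1 j k', fun hn => ?_⟩)
        rcases (n1v0 _ hn).2 with h | h | ⟨j', k'', he, hj'⟩
        · exact absurd h (by simp)
        · exact absurd h (by simp)
        · injection he with h1 h2
          exact hi0 (by rw [h1]; exact hj')
      -- adjacency in P2
      have c3 : P2.adj v0 T = true := by
        refine adj_move_self.mpr ⟨hv0mem2, hTmem2, hv0T, Or.inr ⟨GV.s, hsnb, ?_⟩⟩
        rw [sym1]; exact a1s
      have c3' : P2.adj T v0 = true := by rw [sym2]; exact c3
      set L : Finset (GV ι κ K) :=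
        (Finset.univ.filter (fun i => i ∉ A j ∧ i ≠ i0)).image GV.v with hL
      set F : Finset (GV ι κ K) :=
        (Finset.univ.filter (fun k' => k' ≠ k)).image (GV.t j) with hF
      have hLmem : ∀ z, z ∈ L ↔ ∃ i, i ∉ A j ∧ i ≠ i0 ∧ z = GV.v i := by
        intro z; rw [hL]; simp [eq_comm, and_assoc]
      have hFmem : ∀ z, z ∈ F ↔ ∃ k', k' ≠ k ∧ z = GV.t j k' := by
        intro z; rw [hF]; simp [eq_comm]
      have G2 : GoodPos P2 T L F := by
        refine ⟨sym2, irr2, supp2, prop2, hTmem2, by rw [hbl2, if_neg (Ne.symm hv0T), if_pos rfl],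
          ?_, ?_, ?_, ?_, ?_, ?_, ?_, ?_, ?_⟩
        · -- Lsub
          intro z hz
          obtain ⟨i, hi1, hi2, rfl⟩ := (hLmem z).mp hz
          exact hvmem2 i hi1
        · -- hnotL
          intro hz
          obtain ⟨i, -, -, he⟩ := (hLmem T).mp hz
          simp [hT] at he
        · -- blacks
          intro z hz hzb
          rw [hbl2] at hzb
          rcases eq_or_ne z v0 with rfl | hzv0
          · rw [if_pos rfl] at hzb; exact absurd hzb (by simp)
          rw [if_neg hzv0] at hzb
          rcases eq_or_ne z T with rfl | hzT
          · exact Or.inl rfl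
          rw [if_neg hzT] at hzb
          right
          have hz1 : z ∈ P1.verts := by
            rcases (mem2 z).mp hz with he | h
            · exact absurd he hzv0
            · exact h.1
          have hzadj : G.adj T z = false := by
            rcases (mem1 z).mp hz1 with he | h
            · exact absurd he hzT
            · exact h
          rcases z with i | i | k' | ⟨j', k'⟩ | _ | _
          · refine (hLmem _).mpr ⟨i, ?_, ?_, rfl⟩
            · intro hi
              rw [show G.adj T (GV.v i) = true by
                simp [hG, GPos, Gedge, hT, hi]] at hzadj
              exact absurd hzadj (by simp)
            · intro he; exact hzv0 (by rw [hv0, he])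
          · exact absurd hzb (by simp [Gblack])
          · rw [show G.adj T (GV.w k') = true by simp [hG, GPos, Gedge, hT]] at hzadj
            exact absurd hzadj (by simp)
          · exact absurd hzb (by simp [Gblack])
          · rw [show G.adj T GV.r = true by simp [hG, GPos, Gedge, hT]] at hzadj
            exact absurd hzadj (by simp)
          · exact absurd hzb (by simp [Gblack])
        · -- Lblack
          intro b hb
          obtain ⟨i, hi1, hi2, rfl⟩ := (hLmem b).mp hb
          rw [hbl2, if_neg (by simp [hv0, hi2]), if_neg (by simp [hT])]
          rfl
        · -- whiteadj
          intro w hw hww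
          rcases eq_or_ne w v0 with rfl | hwv0
          · exact c3'
          rw [hbl2, if_neg hwv0] at hww
          have hwT : w ≠ T := fun he => by rw [if_pos he] at hww; exact absurd hww (by simp)
          rw [if_neg hwT] at hww
          have hw1 : w ∈ P1.verts ∧ w ∉ P1.nbrs v0 := by
            rcases (mem2 w).mp hw with he | h
            · exact absurd he hwv0
            · exact h
          rcases w with i | i | k' | ⟨j', k'⟩ | _ | _
          · exact absurd hww (by simp [Gblack])
          · exact (adj_move_other (Ne.symm hv0T) (by simp [hv0])).mpr
              ⟨hTmem2, hw, by simp [hT], a1u i⟩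
          · exact absurd ((mem1 _).mp hw1.1) (by
              rintro (he | h)
              · exact hwT he
              · rw [show G.adj T (GV.w k') = true by simp [hG, GPos, Gedge, hT]] at h
                exact absurd h (by simp))
          · exact (adj_move_other (Ne.symm hv0T) (by simp [hv0])).mpr
              ⟨hTmem2, hw, Ne.symm hwT, a1t j' k' hwT⟩
          · exact absurd ((mem1 _).mp hw1.1) (by
              rintro (he | h)
              · exact hwT he
              · rw [show G.adj T GV.r = true by simp [hG, GPos, Gedge, hT]] at h
                exact absurd h (by simp))
          · exact absurd hsnb hw1.2
        · -- leafnbr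
          intro b hb
          obtain ⟨i, hi1, hi2, rfl⟩ := (hLmem b).mp hb
          refine ⟨GV.u i, (adj_move_other (by simp [hv0, hi2]) (by simp [hv0])).mpr
            ⟨hvmem2 i hi1, humem2 i hi2, by simp,
             (adj_move_other (by simp [hT]) (by simp [hT])).mpr
               ⟨hvmem1 i hi1, humem1 i, by simp, by simp [hG, GPos, Gedge]⟩⟩⟩
        · -- Fsub
          intro f hf
          obtain ⟨k', hk', rfl⟩ := (hFmem f).mp hf
          exact htmem2 k' hk'
        · -- Ffree
          intro f hf
          obtain ⟨k', hk', rfl⟩ := (hFmem f).mp hf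
          have hfT : (GV.t j k' : GV ι κ K) ≠ T := by simp [hT, hk']
          constructor
          · rw [hbl2, if_neg (by simp [hv0]), if_neg hfT]; rfl
          · intro y hy
            rcases eq_or_ne y v0 with rfl | hyv0
            · exfalso
              rw [sym2] at hy
              rcases adj_move_self.mp hy with ⟨-, -, -, h1 | ⟨d, hd1, hd2⟩⟩
              · have := ((adj_move_other hv0T hfT).mp h1).2.2.2
                simp [hG, GPos, Gedge, hv0, hi0] at this
              · obtain ⟨hd3, hshape⟩ := n1v0 d hd1
                rcases hshape with rfl | rfl | ⟨j'', k'', rfl, hj''⟩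
                · have h4 := ((adj_move_other (by simp [hT]) hfT).mp hd2).2.2.2
                  simp [hG, GPos, Gedge] at h4
                · have h4 := ((adj_move_other (by simp [hT]) hfT).mp hd2).2.2.2
                  simp [hG, GPos, Gedge] at h4
                · have hdT : (GV.t j'' k'' : GV ι κ K) ≠ T := by
                    rw [hT]
                    intro he
                    injection he with e1 e2
                    exact hi0 (by rw [← e1]; exact hj'')
                  have h4 := ((adj_move_other hdT hfT).mp hd2).2.2.2
                  simp [hG, GPos, Gedge] at h4
            · rcases eq_or_ne y T with rfl | hyT
              · rfl
              exfalso
              have h1 := (adj_move_other (by simp [hv0]) hyv0).mp hy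
              have h2 := ((adj_move_other hfT hyT).mp h1.2.2.2).2.2.2
              have hy2 : y ∈ P2.verts := h1.2.1
              have hy1 : y ∈ P1.verts := by
                rcases (mem2 y).mp hy2 with he | h
                · exact absurd he hyv0
                · exact h.1
              have hyadjT : G.adj T y = false := by
                rcases (mem1 y).mp hy1 with he | h
                · exact absurd he hyT
                · exact h
              rcases y with i | i | k'' | ⟨j'', k''⟩ | _ | _
              · simp only [hG, GPos, Gedge] at h2
                simp only [Bool.or_eq_true, decide_eq_true_eq] at h2
                rcases h2 with h2 | h2
                · exact absurd h2 (by simp [Gedge] at h2)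
                · rw [show G.adj T (GV.v i) = true by
                    simp [hG, GPos, Gedge, hT, h2]] at hyadjT
                  exact absurd hyadjT (by simp)
              · simp [hG, GPos, Gedge] at h2
              · rw [show G.adj T (GV.w k'') = true by
                  simp [hG, GPos, Gedge, hT]] at hyadjT
                exact absurd hyadjT (by simp)
              · simp [hG, GPos, Gedge] at h2
              · rw [show G.adj T GV.r = true by simp [hG, GPos, Gedge, hT]] at hyadjT
                exact absurd hyadjT (by simp)
              · simp [hG, GPos, Gedge] at h2
        · -- Fcard
          have hFcard : F.card = K - 1 := by
            rw [hF, Finset.card_image_of_injective _ (fun a b h => by injection h),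
              Finset.filter_ne', Finset.card_erase_of_mem (Finset.mem_univ k)]
            simp
          have hLcard : L.card ≤ Fintype.card ι - 1 := by
            rw [hL, Finset.card_image_of_injective _ (fun a b h => by injection h)]
            calc (Finset.univ.filter (fun i => i ∉ A j ∧ i ≠ i0)).card
                ≤ (Finset.univ.erase i0).card := by
                  apply Finset.card_le_card
                  intro i hi
                  obtain ⟨-, h2⟩ := (Finset.mem_filter.mp hi).2
                  exact Finset.mem_erase.mpr ⟨h2, Finset.mem_univ i⟩
              _ = Fintype.card ι - 1 := by
                  rw [Finset.card_erase_of_mem (Finset.mem_univ i0)]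
                  simp
          have hI1 : 1 ≤ Fintype.card ι := Fintype.card_pos_iff.mpr ⟨i0⟩
          omega
      have hcard2 : P2.verts.card + 1 ≤ P1.verts.card := card_move_lt hv0mem1 irr1 hsnb
      exact good_not_blackWins _ P2 T L F (by omega) G2
end

section
/- (Simulation lemma, Black) In the Paintbucket game on G_K(C, A), if Black moves at u_i, the resulting colored bipartite graph is isomorphic to G_K(C \ {c_i}, (A_j \ {c_i})_j), i.e., Black's move at u_i simulates the avoider's move at c_i. -/
namespace SimAux
open PB GV
variable {ι κ : Type} [Fintype ι] [Fintype κ] [DecidableEq ι] [DecidableEq κ]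
  (A : κ → Finset ι) (K : ℕ) (i : ι)

def simF (i : ι) {κ : Type} {K : ℕ} : GV ι κ K → GV {x : ι // x ≠ i} κ K
  | .v a => if h : a = i then .s else .v ⟨a, h⟩
  | .u a => if h : a = i then .r else .u ⟨a, h⟩
  | .w k => .w k
  | .t j k => .t j k
  | .r => .s
  | .s => .s

lemma nbrs_eq : (GPos A K).nbrs (GV.u i) = {GV.r, GV.v i} := by
  ext y
  cases y <;> simp [nbrs, GPos, Gedge]

lemma mem_verts (x : GV ι κ K) :
    x ∈ (move true (GPos A K) (GV.u i)).verts ↔ x ≠ GV.r ∧ x ≠ GV.v i := by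
  simp only [move, nbrs_eq]
  cases x <;> simp [GPos]

end SimAux


set_option maxHeartbeats 1600000 in
open SimAux in
open PB in
/-- simulation, Black: Black's move at `u i` in `G_K(C, A)`
yields a position isomorphic to `G_K(C \ {c_i}, (A_j \ {c_i})_j)`, i.e. it
simulates the avoider's move at the cell `i`. -/
theorem paintbucket_simulation_black
    {ι κ : Type} [Fintype ι] [Fintype κ] [DecidableEq ι] [DecidableEq κ]
    (A : κ → Finset ι) (K : ℕ) (i : ι) :
    Isom (move true (GPos A K) (GV.u i))
      (GPos (ι := {x : ι // x ≠ i}) (κ := κ)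
        (fun j => (A j).subtype fun x => x ≠ i) K) := by
  classical
  refine ⟨simF i, ⟨?_, ?_, ?_⟩, ?_, ?_⟩
  · intro x _; simp [GPos]
  · intro x hx y hy hxy
    rw [Finset.mem_coe, mem_verts] at hx
    rw [Finset.mem_coe, mem_verts] at hy
    rcases x <;> rcases y <;> simp only [simF] at hxy <;>
      (try split_ifs at hxy) <;> simp_all
  · intro y _
    rcases y with ⟨a, ha⟩ | ⟨a, ha⟩ | k | ⟨j, k⟩ | _ | _
    · exact ⟨GV.v a, by rw [Finset.mem_coe, mem_verts]; simp [ha], by simp [simF, ha]⟩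
    · exact ⟨GV.u a, by rw [Finset.mem_coe, mem_verts]; simp, by simp [simF, ha]⟩
    · exact ⟨GV.w k, by rw [Finset.mem_coe, mem_verts]; simp, by simp [simF]⟩
    · exact ⟨GV.t j k, by rw [Finset.mem_coe, mem_verts]; simp, by simp [simF]⟩
    · exact ⟨GV.u i, by rw [Finset.mem_coe, mem_verts]; simp, by simp [simF]⟩
    · exact ⟨GV.s, by rw [Finset.mem_coe, mem_verts]; simp, by simp [simF]⟩
  · intro x hx
    rw [mem_verts] at hx
    rcases x <;> simp only [simF] <;> (try split_ifs) <;>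
      simp only [move, nbrs_eq] <;> simp_all [GPos, Gblack]
  · intro x hx y hy
    rw [mem_verts] at hx
    rw [mem_verts] at hy
    rcases x <;> rcases y <;> simp only [simF] <;> (try split_ifs) <;>
      rw [Bool.eq_iff_iff] <;> simp only [move, nbrs_eq] <;>
      simp_all [GPos, Gedge, Finset.mem_subtype] <;> (rintro rfl; simp_all)
end

section
/- (Simulation lemma, White) In the Paintbucket game on G_K(C, A), if White moves at v_i, the resulting colored bipartite graph is isomorphic to G_K(C \ {c_i}, (A_j)_{j : c_i ∉ A_j}), i.e., White's move at v_i simulates the enforcer's move at c_i. -/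
section Aux
variable {ι κ : Type} [Fintype ι] [Fintype κ] [DecidableEq ι] [DecidableEq κ]
  (A : κ → Finset ι) {K : ℕ} (i : ι)

/-- The isomorphism map: `v i` becomes the new `s`; dead vertices map to junk. -/
def GVmap : GV ι κ K → GV {x : ι // x ≠ i} {j : κ // i ∉ A j} K
  | .v x => if h : x = i then .s else .v ⟨x, h⟩
  | .u x => if h : x = i then .r else .u ⟨x, h⟩
  | .w k => .w k
  | .t j k => if h : i ∈ A j then .s else .t ⟨j, h⟩ k
  | .r => .r
  | .s => .s

def live : GV ι κ K → Prop
  | .v _ => True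
  | .u x => x ≠ i
  | .w _ => True
  | .t j _ => i ∉ A j
  | .r => True
  | .s => False

lemma mem_moved_verts (x : GV ι κ K) :
    x ∈ (PB.move false (GPos A K) (GV.v i)).verts ↔ live A i x := by
  show x ∈ insert (GV.v i) (_ \ _) ↔ _
  rw [Finset.mem_insert, Finset.mem_sdiff]
  simp only [PB.nbrs, Finset.mem_filter, Finset.mem_univ, true_and]
  cases x <;> simp [GPos, Gedge, live, eq_comm]

/-- Vertices adjacent to `v i` after the move: `r`, the `w k`, and the `v x`. -/
def toS : GV ι κ K → Bool
  | .v _ => true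
  | .u _ => false
  | .w _ => true
  | .t _ _ => false
  | .r => true
  | .s => false

section GedgeLemmas
variable {ι κ : Type} [DecidableEq ι] {K : ℕ} (A : κ → Finset ι)
@[simp] lemma Gedge_vv0 (x : ι) (y : ι) : Gedge (K := K) A (GV.v x) (GV.v y) = false := rfl
@[simp] lemma Gedge_vu1 (x : ι) (y : ι) : Gedge (K := K) A (GV.v x) (GV.u y) = decide (x = y) := rfl
@[simp] lemma Gedge_vw2 (x : ι) (y : Fin K) : Gedge (K := K) A (GV.v x) (GV.w y) = false := rfl
@[simp] lemma Gedge_vt3 (x : ι) (y : κ) (j2 : Fin K) : Gedge (K := K) A (GV.v x) (GV.t y j2) = decide (x ∈ A y) := rfl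
@[simp] lemma Gedge_vr4 (x : ι) : Gedge (K := K) A (GV.v x) GV.r = false := rfl
@[simp] lemma Gedge_vs5 (x : ι) : Gedge (K := K) A (GV.v x) GV.s = true := rfl
@[simp] lemma Gedge_uv6 (x : ι) (y : ι) : Gedge (K := K) A (GV.u x) (GV.v y) = false := rfl
@[simp] lemma Gedge_uu7 (x : ι) (y : ι) : Gedge (K := K) A (GV.u x) (GV.u y) = false := rfl
@[simp] lemma Gedge_uw8 (x : ι) (y : Fin K) : Gedge (K := K) A (GV.u x) (GV.w y) = false := rfl
@[simp] lemma Gedge_ut9 (x : ι) (y : κ) (j2 : Fin K) : Gedge (K := K) A (GV.u x) (GV.t y j2) = false := rfl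
@[simp] lemma Gedge_ur10 (x : ι) : Gedge (K := K) A (GV.u x) GV.r = false := rfl
@[simp] lemma Gedge_us11 (x : ι) : Gedge (K := K) A (GV.u x) GV.s = false := rfl
@[simp] lemma Gedge_wv12 (x : Fin K) (y : ι) : Gedge (K := K) A (GV.w x) (GV.v y) = false := rfl
@[simp] lemma Gedge_wu13 (x : Fin K) (y : ι) : Gedge (K := K) A (GV.w x) (GV.u y) = false := rfl
@[simp] lemma Gedge_ww14 (x : Fin K) (y : Fin K) : Gedge (K := K) A (GV.w x) (GV.w y) = false := rfl
@[simp] lemma Gedge_wt15 (x : Fin K) (y : κ) (j2 : Fin K) : Gedge (K := K) A (GV.w x) (GV.t y j2) = false := rfl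
@[simp] lemma Gedge_wr16 (x : Fin K) : Gedge (K := K) A (GV.w x) GV.r = false := rfl
@[simp] lemma Gedge_ws17 (x : Fin K) : Gedge (K := K) A (GV.w x) GV.s = false := rfl
@[simp] lemma Gedge_tv18 (x : κ) (j1 : Fin K) (y : ι) : Gedge (K := K) A (GV.t x j1) (GV.v y) = false := rfl
@[simp] lemma Gedge_tu19 (x : κ) (j1 : Fin K) (y : ι) : Gedge (K := K) A (GV.t x j1) (GV.u y) = false := rfl
@[simp] lemma Gedge_tw20 (x : κ) (j1 : Fin K) (y : Fin K) : Gedge (K := K) A (GV.t x j1) (GV.w y) = true := rfl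
@[simp] lemma Gedge_tt21 (x : κ) (j1 : Fin K) (y : κ) (j2 : Fin K) : Gedge (K := K) A (GV.t x j1) (GV.t y j2) = false := rfl
@[simp] lemma Gedge_tr22 (x : κ) (j1 : Fin K) : Gedge (K := K) A (GV.t x j1) GV.r = true := rfl
@[simp] lemma Gedge_ts23 (x : κ) (j1 : Fin K) : Gedge (K := K) A (GV.t x j1) GV.s = false := rfl
@[simp] lemma Gedge_rv24 (y : ι) : Gedge (K := K) A GV.r (GV.v y) = false := rfl
@[simp] lemma Gedge_ru25 (y : ι) : Gedge (K := K) A GV.r (GV.u y) = true := rfl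
@[simp] lemma Gedge_rw26 (y : Fin K) : Gedge (K := K) A GV.r (GV.w y) = false := rfl
@[simp] lemma Gedge_rt27 (y : κ) (j2 : Fin K) : Gedge (K := K) A GV.r (GV.t y j2) = false := rfl
@[simp] lemma Gedge_rr28 : Gedge (K := K) A GV.r GV.r = false := rfl
@[simp] lemma Gedge_rs29 : Gedge (K := K) A GV.r GV.s = false := rfl
@[simp] lemma Gedge_sv30 (y : ι) : Gedge (K := K) A GV.s (GV.v y) = false := rfl
@[simp] lemma Gedge_su31 (y : ι) : Gedge (K := K) A GV.s (GV.u y) = false := rfl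
@[simp] lemma Gedge_sw32 (y : Fin K) : Gedge (K := K) A GV.s (GV.w y) = true := rfl
@[simp] lemma Gedge_st33 (y : κ) (j2 : Fin K) : Gedge (K := K) A GV.s (GV.t y j2) = false := rfl
@[simp] lemma Gedge_sr34 : Gedge (K := K) A GV.s GV.r = true := rfl
@[simp] lemma Gedge_ss35 : Gedge (K := K) A GV.s GV.s = false := rfl
end GedgeLemmas

lemma GPos_adj' {ι κ : Type} [Fintype ι] [Fintype κ] [DecidableEq ι] [DecidableEq κ]
    (A : κ → Finset ι) (K : ℕ) (x y : GV ι κ K) :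
    (GPos A K).adj x y = (Gedge A x y || Gedge A y x) := rfl

lemma exists_del_iff (y : GV ι κ K) :
    (∃ w ∈ (GPos A K).nbrs (GV.v i), (GPos A K).adj w y = true) ↔
      toS (ι := ι) (κ := κ) (K := K) y = true := by
  simp only [PB.nbrs, Finset.mem_filter, Finset.mem_univ, true_and]
  constructor
  · rintro ⟨w, hw, h⟩
    cases w <;> cases y <;> simp_all [GPos_adj', toS]
  · intro h
    cases y <;> simp_all [toS] <;> exact ⟨GV.s, by simp [GPos, GPos_adj']⟩

lemma moved_adj (x y : GV ι κ K) (hx : live A i x) (hy : live A i y) :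
    (PB.move false (GPos A K) (GV.v i)).adj x y =
      (decide (x ≠ y) &&
        (if x = GV.v i then toS y
         else if y = GV.v i then toS x
         else (GPos A K).adj x y)) := by
  have hx' : x ∈ (PB.move false (GPos A K) (GV.v i)).verts := (mem_moved_verts A i x).mpr hx
  have hy' : y ∈ (PB.move false (GPos A K) (GV.v i)).verts := (mem_moved_verts A i y).mpr hy
  simp only [PB.move] at hx' hy' ⊢
  rw [decide_eq_true hx', decide_eq_true hy']
  simp only [Bool.true_and]
  congr 1
  split_ifs with h1 h2
  · subst h1
    have hz : (GPos A K).adj (GV.v i) y = false := by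
      cases y <;> simp_all [GPos_adj', live] <;> tauto
    rw [hz, Bool.false_or]
    rw [Bool.eq_iff_iff, decide_eq_true_eq, exists_del_iff A i y]
  · subst h2
    have hz : (GPos A K).adj (GV.v i) x = false := by
      cases x <;> simp_all [GPos_adj', live] <;> tauto
    rw [hz, Bool.false_or]
    rw [Bool.eq_iff_iff, decide_eq_true_eq, exists_del_iff A i x]
  · rfl
end Aux

open PB in
/-- simulation, White: White's move at `v i` in `G_K(C, A)`
yields a position isomorphic to `G_K(C \ {c_i}, (A_j)_{j : c_i ∉ A_j})`, i.e.
it simulates the enforcer's move at the cell `i`. -/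
theorem paintbucket_simulation_white
    {ι κ : Type} [Fintype ι] [Fintype κ] [DecidableEq ι] [DecidableEq κ]
    (A : κ → Finset ι) (K : ℕ) (i : ι) :
    Isom (move false (GPos A K) (GV.v i))
      (GPos (ι := {x : ι // x ≠ i}) (κ := {j : κ // i ∉ A j})
        (fun j => (A j.1).subtype fun x => x ≠ i) K) := by
  classical
  refine ⟨GVmap A i, ⟨?_, ?_, ?_⟩, ?_, ?_⟩
  · intro x _; simp [GPos]
  · -- InjOn
    intro a ha b hb hab
    simp only [Finset.mem_coe, mem_moved_verts] at ha hb
    cases a <;> cases b <;>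
      simp only [GVmap, live] at ha hb hab <;>
      first
      | (split_ifs at hab <;> simp_all)
      | simp_all
  · -- SurjOn
    intro y _
    simp only [Set.mem_image, Finset.mem_coe, mem_moved_verts]
    rcases y with ⟨x, hx⟩ | ⟨x, hx⟩ | k | ⟨⟨j, hj⟩, k⟩ | _ | _
    · exact ⟨GV.v x, trivial, by simp [GVmap, hx]⟩
    · exact ⟨GV.u x, hx, by simp [GVmap, hx]⟩
    · exact ⟨GV.w k, trivial, rfl⟩
    · exact ⟨GV.t j k, hj, by simp [GVmap, hj]⟩
    · exact ⟨GV.r, trivial, rfl⟩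
    · exact ⟨GV.v i, trivial, by simp [GVmap]⟩
  · -- black
    intro x hx
    rw [mem_moved_verts] at hx
    show Gblack (GVmap A i x) = (if x = GV.v i then false else Gblack x)
    cases x <;>
      simp only [GVmap, live, Gblack] at hx ⊢ <;>
      first
      | (split_ifs <;> simp_all [Gblack])
      | rfl
  · -- adjacency
    intro x hx y hy
    rw [mem_moved_verts] at hx hy
    rw [moved_adj A i x y hx hy]
    cases x <;> cases y <;>
      simp only [GVmap, GPos_adj'] <;>
      (try split_ifs) <;>
      (try simp_all [toS, live, Subtype.ext_iff, Finset.mem_subtype]) <;>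
      (try tauto)
end
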